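/- Let ℓ: R^{m×n} → R be differentiable with L-Lipschitz gradient, and let S be a random-k sketching matrix. Then E_S[ℓ(W_0 + B S A)] − ℓ(W_0 + B A) ≤ (L/2) · (r/k − 1) · ‖B‖_F^2 ‖A‖_F^2. -/

import Mathlib

/-!
Since `∇ℓ` is `L`-Lipschitz, `ℓ (X + H) ≤ ℓ X + ∇ℓ(X) H + L/2 ‖H‖²`. Take `X = W₀ + B A` and
`H = B (S - I) A`. Averaged over the `k`-subsets, `S` has mean `I` (each index lies in a fraction
`k / r` of them), so the linear term vanishes, and `‖B (S - I) A‖² ≤ ‖B‖² ‖(S - I) A‖²`, whose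
mean is `(r/k - 1) ‖A‖²` because each diagonal entry of `S - I` has second moment `r/k - 1`.
-/

open Matrix

attribute [local instance] Matrix.frobeniusNormedAddCommGroup Matrix.frobeniusNormedSpace

/-- The random-`k` sketching matrix associated with an index set `I ⊆ {1,…,r}`. -/
noncomputable def sketch {r : ℕ} (k : ℕ) (I : Finset (Fin r)) : Matrix (Fin r) (Fin r) ℝ :=
  Matrix.diagonal (fun j => if j ∈ I then (r : ℝ) / k else 0)

open Finset

theorem apply_add_le_of_norm_fderiv_sub_le {E : Type*} [NormedAddCommGroup E] [NormedSpace ℝ E]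
    {f : E → ℝ} {L : ℝ} (hf : Differentiable ℝ f)
    (hLip : ∀ X Y, ‖fderiv ℝ f X - fderiv ℝ f Y‖ ≤ L * ‖X - Y‖) (X H : E) :
    f (X + H) ≤ f X + fderiv ℝ f X H + L / 2 * ‖H‖ ^ 2 := by
  have hline : ∀ t : ℝ, HasDerivAt (fun s : ℝ => f (X + s • H)) (fderiv ℝ f (X + t • H) H) t :=
    fun t => (hf _).hasFDerivAt.comp_hasDerivAt t
      (by simpa using ((hasDerivAt_id t).smul_const H).const_add X)
  have hbound : ∀ t : ℝ,
      HasDerivAt (fun s : ℝ => f X + s * fderiv ℝ f X H + L / 2 * s ^ 2 * ‖H‖ ^ 2)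
      (fderiv ℝ f X H + L * t * ‖H‖ ^ 2) t := by
    intro t
    refine ((((hasDerivAt_id' t).mul_const _).const_add _).add
      (((hasDerivAt_pow 2 t).const_mul (L / 2)).mul_const _)).congr_deriv ?_
    push_cast; ring
  have hslope : ∀ t ∈ Set.Ico (0 : ℝ) 1,
      fderiv ℝ f (X + t • H) H ≤ fderiv ℝ f X H + L * t * ‖H‖ ^ 2 := by
    rintro t ⟨ht, -⟩
    have := calc (fderiv ℝ f (X + t • H) - fderiv ℝ f X) H
        ≤ ‖fderiv ℝ f (X + t • H) - fderiv ℝ f X‖ * ‖H‖ :=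
          (Real.le_norm_self _).trans (ContinuousLinearMap.le_opNorm _ _)
      _ ≤ L * ‖t • H‖ * ‖H‖ := by
          gcongr
          simpa using hLip (X + t • H) X
      _ = L * t * ‖H‖ ^ 2 := by rw [norm_smul, Real.norm_of_nonneg ht]; ring
    rw [_root_.sub_apply] at this
    linarith
  simpa using image_le_of_deriv_right_le_deriv_boundary
    (fun t _ => (hline t).continuousAt.continuousWithinAt) (fun t _ => (hline t).hasDerivWithinAt)
    (by simp) (fun t _ => (hbound t).continuousAt.continuousWithinAt)
    (fun t _ => (hbound t).hasDerivWithinAt) hslope (Set.right_mem_Icc.2 zero_le_one)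

theorem sum_apply_add_le_of_norm_fderiv_sub_le {ι E : Type*} [NormedAddCommGroup E]
    [NormedSpace ℝ E] {f : E → ℝ} {L : ℝ} (hf : Differentiable ℝ f)
    (hLip : ∀ X Y, ‖fderiv ℝ f X - fderiv ℝ f Y‖ ≤ L * ‖X - Y‖) (s : Finset ι) (X : E)
    {H : ι → E} (hH : ∑ i ∈ s, H i = 0) :
    ∑ i ∈ s, f (X + H i) ≤ #s * f X + L / 2 * ∑ i ∈ s, ‖H i‖ ^ 2 := by
  calc ∑ i ∈ s, f (X + H i)
      ≤ ∑ i ∈ s, (f X + fderiv ℝ f X (H i) + L / 2 * ‖H i‖ ^ 2) :=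
        sum_le_sum fun i _ => apply_add_le_of_norm_fderiv_sub_le hf hLip X (H i)
    _ = #s * f X + L / 2 * ∑ i ∈ s, ‖H i‖ ^ 2 := by
        rw [sum_add_distrib, sum_add_distrib, ← map_sum, hH, map_zero, sum_const, nsmul_eq_mul,
          mul_sum, add_zero]

theorem nonneg_of_norm_fderiv_sub_le {E F : Type*} [NormedAddCommGroup E] [NormedSpace ℝ E]
    [Nontrivial E] [NormedAddCommGroup F] [NormedSpace ℝ F] {f : E → F} {L : ℝ}
    (h : ∀ X Y, ‖fderiv ℝ f X - fderiv ℝ f Y‖ ≤ L * ‖X - Y‖) : 0 ≤ L := by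
  obtain ⟨X, hX⟩ := exists_ne (0 : E)
  have := (norm_nonneg _).trans (h X 0)
  rw [sub_zero] at this
  exact nonneg_of_mul_nonneg_left this (norm_pos_iff.2 hX)

theorem card_filter_mem_powersetCard_univ {α : Type*} [Fintype α] [DecidableEq α] {k : ℕ}
    (hk : 1 ≤ k) (a : α) :
    #{I ∈ powersetCard k univ | a ∈ I} = (Fintype.card α - 1).choose (k - 1) := by
  simpa using card_filter_powersetCard_subset {a} univ k (subset_univ _) hk

theorem Matrix.frobenius_norm_sq {m n : Type*} [Fintype m] [Fintype n] (M : Matrix m n ℝ) :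
    ‖M‖ ^ 2 = ∑ i, ∑ j, M i j ^ 2 := by
  rw [frobenius_norm_def, ← Real.rpow_natCast, ← Real.rpow_mul (by positivity)]
  norm_num [Real.rpow_two, sq_abs]

section Sketch

variable {r k : ℕ}

theorem sum_sketch_weight (hk : 1 ≤ k) (hkr : k ≤ r) (j : Fin r) :
    ∑ I ∈ (univ : Finset (Fin r)).powersetCard k, (if j ∈ I then (r : ℝ) / k else 0)
      = r.choose k := by
  obtain ⟨k, rfl⟩ := Nat.exists_eq_add_of_le' hk
  obtain ⟨r, rfl⟩ := Nat.exists_eq_add_of_le' (hk.trans hkr)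
  have hcount : ((r + 1) * r.choose k : ℝ) = (r + 1).choose (k + 1) * (k + 1) := by
    exact_mod_cast Nat.add_one_mul_choose_eq r k
  rw [sum_ite, sum_const_zero, add_zero, sum_const, card_filter_mem_powersetCard_univ hk,
    Fintype.card_fin, nsmul_eq_mul]
  push_cast
  field_simp
  linear_combination hcount

theorem sum_sketch_weight_sub_one_sq (hk : 1 ≤ k) (hkr : k ≤ r) (j : Fin r) :
    ∑ I ∈ (univ : Finset (Fin r)).powersetCard k, ((if j ∈ I then (r : ℝ) / k else 0) - 1) ^ 2
      = r.choose k * ((r : ℝ) / k - 1) := by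
  -- the weight only takes the values `0` and `r / k`
  have hquad : ∀ I : Finset (Fin r), ((if j ∈ I then (r : ℝ) / k else 0) - 1) ^ 2
      = ((r : ℝ) / k - 2) * (if j ∈ I then (r : ℝ) / k else 0) + 1 := by
    intro I; split_ifs <;> ring
  rw [sum_congr rfl fun I _ => hquad I, sum_add_distrib, ← mul_sum, sum_sketch_weight hk hkr,
    sum_const, card_powersetCard, card_univ, Fintype.card_fin, nsmul_one]
  ring

theorem sum_sketch (hk : 1 ≤ k) (hkr : k ≤ r) :
    ∑ I ∈ (univ : Finset (Fin r)).powersetCard k, sketch k I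
      = (r.choose k : ℝ) • (1 : Matrix (Fin r) (Fin r) ℝ) := by
  calc ∑ I ∈ (univ : Finset (Fin r)).powersetCard k, sketch k I
      = diagonal (∑ I ∈ (univ : Finset (Fin r)).powersetCard k,
          fun j => if j ∈ I then (r : ℝ) / k else 0) :=
        (map_sum (diagonalAddMonoidHom (Fin r) ℝ) _ _).symm
    _ = diagonal fun _ => (r.choose k : ℝ) := by
        congr 1; ext j; rw [Finset.sum_apply, sum_sketch_weight hk hkr]
    _ = (r.choose k : ℝ) • 1 := (smul_one_eq_diagonal _).symm

theorem sketch_mul_sub_apply {n : ℕ} (I : Finset (Fin r)) (A : Matrix (Fin r) (Fin n) ℝ)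
    (j : Fin r) (l : Fin n) :
    (sketch k I * A - A : Matrix (Fin r) (Fin n) ℝ) j l
      = ((if j ∈ I then (r : ℝ) / k else 0) - 1) * A j l := by
  rw [Matrix.sub_apply, sketch, diagonal_mul]
  ring

theorem sum_norm_sketch_mul_sub_sq (hk : 1 ≤ k) (hkr : k ≤ r) {n : ℕ}
    (A : Matrix (Fin r) (Fin n) ℝ) :
    ∑ I ∈ (univ : Finset (Fin r)).powersetCard k, ‖sketch k I * A - A‖ ^ 2
      = r.choose k * ((r : ℝ) / k - 1) * ‖A‖ ^ 2 := by
  simp only [frobenius_norm_sq, sketch_mul_sub_apply, mul_pow, ← mul_sum]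
  rw [sum_comm, mul_sum]
  refine sum_congr rfl fun j _ => ?_
  rw [← sum_mul, sum_sketch_weight_sub_one_sq hk hkr]

theorem sum_mul_sketch_mul_sub_eq_zero (hk : 1 ≤ k) (hkr : k ≤ r) {m n : ℕ}
    (B : Matrix (Fin m) (Fin r) ℝ) (A : Matrix (Fin r) (Fin n) ℝ) :
    ∑ I ∈ (univ : Finset (Fin r)).powersetCard k, B * (sketch k I * A - A) = 0 := by
  rw [← Matrix.mul_sum, sum_sub_distrib, ← Matrix.sum_mul, sum_sketch hk hkr, sum_const,
    card_powersetCard, card_univ, Fintype.card_fin, smul_mul, Matrix.one_mul,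
    Nat.cast_smul_eq_nsmul, sub_self, Matrix.mul_zero]

theorem sum_norm_mul_sketch_mul_sub_sq_le (hk : 1 ≤ k) (hkr : k ≤ r) {m n : ℕ}
    (B : Matrix (Fin m) (Fin r) ℝ) (A : Matrix (Fin r) (Fin n) ℝ) :
    ∑ I ∈ (univ : Finset (Fin r)).powersetCard k, ‖B * (sketch k I * A - A)‖ ^ 2
      ≤ r.choose k * ((r : ℝ) / k - 1) * (‖B‖ ^ 2 * ‖A‖ ^ 2) :=
  calc ∑ I ∈ (univ : Finset (Fin r)).powersetCard k, ‖B * (sketch k I * A - A)‖ ^ 2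
      ≤ ∑ I ∈ (univ : Finset (Fin r)).powersetCard k, ‖B‖ ^ 2 * ‖sketch k I * A - A‖ ^ 2 :=
        sum_le_sum fun I _ => by rw [← mul_pow]; gcongr; exact frobenius_norm_mul _ _
    _ = r.choose k * ((r : ℝ) / k - 1) * (‖B‖ ^ 2 * ‖A‖ ^ 2) := by
        rw [← mul_sum, sum_norm_sketch_mul_sub_sq hk hkr]; ring

end Sketch

/-- If `ℓ : ℝ^{m×n} → ℝ` is differentiable with `L`-Lipschitz gradient
(in Frobenius norm) and `S` is a random-`k` sketching matrix, then
`E_S[ℓ(W₀ + B S A)] − ℓ(W₀ + B A) ≤ (L/2)·(r/k − 1)·‖B‖_F² ‖A‖_F²`. -/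
theorem sketched_loss_approximation_error (m n r k : ℕ) (hk : 1 ≤ k) (hkr : k ≤ r)
    (L : ℝ) (ℓ : Matrix (Fin m) (Fin n) ℝ → ℝ)
    (hdiff : Differentiable ℝ ℓ)
    (hLip : ∀ X Y, @norm (Matrix (Fin m) (Fin n) ℝ →L[ℝ] ℝ) ContinuousLinearMap.hasOpNorm
      (fderiv ℝ ℓ X - fderiv ℝ ℓ Y) ≤ L * ‖X - Y‖)
    (W₀ : Matrix (Fin m) (Fin n) ℝ)
    (B : Matrix (Fin m) (Fin r) ℝ) (A : Matrix (Fin r) (Fin n) ℝ) :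
    (((Finset.univ : Finset (Fin r)).powersetCard k).card : ℝ)⁻¹ *
        ∑ I ∈ (Finset.univ : Finset (Fin r)).powersetCard k, ℓ (W₀ + B * sketch k I * A)
      - ℓ (W₀ + B * A)
      ≤ L / 2 * ((r : ℝ) / k - 1) * (‖B‖ ^ 2 * ‖A‖ ^ 2) := by
  rw [card_powersetCard, card_univ, Fintype.card_fin]
  have hN : (0 : ℝ) < r.choose k := by exact_mod_cast Nat.choose_pos hkr
  -- if the matrix space is trivial then `B = 0` or `A = 0`; otherwise `hLip` forces `0 ≤ L`
  rcases isEmpty_or_nonempty (Fin m) with hm | hm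
  · simp [Subsingleton.elim B 0, hN.ne']
  rcases isEmpty_or_nonempty (Fin n) with hn | hn
  · simp [Subsingleton.elim A 0, hN.ne']
  have hL : 0 ≤ L := nonneg_of_norm_fderiv_sub_le hLip
  have hperturb (I : Finset (Fin r)) :
      W₀ + B * sketch k I * A = W₀ + B * A + B * (sketch k I * A - A) := by
    simp only [Matrix.mul_sub, Matrix.mul_assoc]; abel
  have hsum := sum_apply_add_le_of_norm_fderiv_sub_le hdiff hLip
    ((univ : Finset (Fin r)).powersetCard k) (W₀ + B * A)
    (sum_mul_sketch_mul_sub_eq_zero hk hkr B A)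
  rw [card_powersetCard, card_univ, Fintype.card_fin] at hsum
  rw [sub_le_iff_le_add, inv_mul_le_iff₀ hN, sum_congr rfl fun I _ => congrArg ℓ (hperturb I)]
  calc _ ≤ _ := hsum
    _ ≤ r.choose k * ℓ (W₀ + B * A)
          + L / 2 * (r.choose k * ((r : ℝ) / k - 1) * (‖B‖ ^ 2 * ‖A‖ ^ 2)) := by
        gcongr; exact sum_norm_mul_sketch_mul_sub_sq_le hk hkr B A
    _ = _ := by ring
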